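/- Pauli twirl: let A = Σ_{(a,b) ∈ {0,1}²} α_{a,b} X^a Z^b be any 2 × 2 complex matrix expanded in the Pauli basis. Then for every 2 × 2 matrix ρ, (1/4) Σ_{(r,s) ∈ {0,1}²} (X^r Z^s)† A (X^r Z^s) ρ (X^r Z^s)† A† (X^r Z^s) = Σ_{(a,b)} |α_{a,b}|² (X^a Z^b) ρ (X^a Z^b)†. That is, conjugating an arbitrary attack by a uniformly random Pauli converts it into a classical mixture of Pauli attacks. -/

import Mathlib

/-!
Conjugating `X^a Z^b` by the Pauli `X^r Z^s` only multiplies it by the sign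
`χ(r,s; a,b) = (-1)^(br + as)`, because `X` and `Z` are self-adjoint involutions that
anticommute. Hence the twirled attack is the average over `q` of `B_q ρ B_q†` with
`B_q = ∑_p χ(q,p) α_p P_p`, and averaging the cross terms `P_p ρ P_p'†` against
`χ(q,p) χ(q,p')` kills every term with `p ≠ p'`, by orthogonality of the characters `χ(·,p)`.
-/

open Matrix

/-- The single-qubit Pauli `X` matrix, indexed by `ZMod 2`. -/
def X1 : Matrix (ZMod 2) (ZMod 2) ℂ :=
  Matrix.of fun i j => if i = j + 1 then 1 else 0

/-- The single-qubit Pauli `Z` matrix, indexed by `ZMod 2`. -/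
def Z1 : Matrix (ZMod 2) (ZMod 2) ℂ :=
  Matrix.of fun i j => if i = j then (-1 : ℂ) ^ j.val else 0

section Anticommute
variable {R : Type*} [Ring R] {x z : R}

theorem mul_pow_eq_neg_one_pow_zsmul (h : z * x = -(x * z)) (a : ℕ) :
    z * x ^ a = (-1 : ℤ) ^ a • (x ^ a * z) := by
  have hsc : SemiconjBy z x (-x) := by rw [SemiconjBy, h, neg_mul]
  rw [(hsc.pow_right a).eq, neg_pow, zsmul_eq_mul, mul_assoc]
  push_cast; rfl

theorem pow_mul_pow_eq_neg_one_pow_zsmul (h : z * x = -(x * z)) (s a : ℕ) :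
    z ^ s * x ^ a = (-1 : ℤ) ^ (s * a) • (x ^ a * z ^ s) := by
  induction s with
  | zero => simp
  | succ s ih =>
    rw [pow_succ, mul_assoc, mul_pow_eq_neg_one_pow_zsmul h, mul_smul_comm, ← mul_assoc, ih,
      smul_mul_assoc, smul_smul, ← pow_add, add_one_mul, add_comm a, mul_assoc]

theorem pow_mul_pow_mul_pow_eq_neg_one_pow_zsmul (hxx : x * x = 1) (h : z * x = -(x * z))
    (r b : ℕ) : x ^ r * z ^ b * x ^ r = (-1 : ℤ) ^ (b * r) • z ^ b := by
  rw [mul_assoc, pow_mul_pow_eq_neg_one_pow_zsmul h, mul_smul_comm, ← mul_assoc,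
    ← (Commute.refl x).mul_pow, hxx, one_pow, one_mul]

variable [StarRing R]

theorem star_mul_mul_mul_eq_neg_one_pow_zsmul (hx : IsSelfAdjoint x) (hz : IsSelfAdjoint z)
    (hxx : x * x = 1) (hzz : z * z = 1) (h : z * x = -(x * z)) (r s a b : ℕ) :
    star (x ^ r * z ^ s) * (x ^ a * z ^ b) * (x ^ r * z ^ s) =
      (-1 : ℤ) ^ (b * r + a * s) • (x ^ a * z ^ b) := by
  have h' : x * z = -(z * x) := by rw [h, neg_neg]
  rw [star_mul, star_pow, star_pow, hx.star_eq, hz.star_eq]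
  calc z ^ s * x ^ r * (x ^ a * z ^ b) * (x ^ r * z ^ s)
      = z ^ s * x ^ a * (x ^ r * z ^ b * x ^ r) * z ^ s := by
        rw [mul_assoc _ (x ^ r), ← mul_assoc (x ^ r), ← pow_add, add_comm, pow_add]
        simp only [mul_assoc]
    _ = (-1 : ℤ) ^ (b * r) • (z ^ s * x ^ a * z ^ s * z ^ b) := by
        rw [pow_mul_pow_mul_pow_eq_neg_one_pow_zsmul hxx h, mul_smul_comm, smul_mul_assoc,
          mul_assoc _ (z ^ b), ← pow_add, add_comm, pow_add, ← mul_assoc]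
    _ = (-1 : ℤ) ^ (b * r + a * s) • (x ^ a * z ^ b) := by
        rw [pow_mul_pow_mul_pow_eq_neg_one_pow_zsmul hzz h', smul_mul_assoc, smul_smul, pow_add]

end Anticommute

section Twirl
variable {ι κ R M : Type*} [Fintype ι] [DecidableEq ι] [Fintype κ] [CommRing R] [StarRing R]
  [Ring M] [StarRing M] [Algebra R M] [StarModule R M]

theorem sum_mul_mul_star_eq_of_orthogonal (χ : κ → ι → R) (c : R)
    (horth : ∀ p p', ∑ q, χ q p * star (χ q p') = if p = p' then c else 0)
    (P : ι → M) (α : ι → R) (ρ : M) :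
    ∑ q, (∑ p, (χ q p * α p) • P p) * ρ * star (∑ p, (χ q p * α p) • P p) =
      c • ∑ p, (α p * star (α p)) • (P p * ρ * star (P p)) := by
  have hexpand : ∀ q,
      (∑ p, (χ q p * α p) • P p) * ρ * star (∑ p, (χ q p * α p) • P p) =
        ∑ p, ∑ p', (χ q p * star (χ q p') * (α p * star (α p'))) • (P p * ρ * star (P p')) := by
    intro q
    rw [Finset.sum_mul, Finset.sum_mul]
    refine Finset.sum_congr rfl fun p _ => ?_
    rw [star_sum, Finset.mul_sum]
    refine Finset.sum_congr rfl fun p' _ => ?_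
    rw [star_smul, star_mul', smul_mul_assoc, smul_mul_assoc, mul_smul_comm, smul_smul]
    congr 1
    ring
  simp only [hexpand]
  rw [Finset.sum_comm]
  simp only [Finset.smul_sum]
  refine Finset.sum_congr rfl fun p _ => ?_
  rw [Finset.sum_comm, Finset.sum_eq_single p]
  · rw [← Finset.sum_smul, ← Finset.sum_mul, horth, if_pos rfl, smul_smul]
  · intro p' _ hp'
    rw [← Finset.sum_smul, ← Finset.sum_mul, horth, if_neg (Ne.symm hp'), zero_mul, zero_smul]
  · simp

end Twirl

theorem forall_zmod_two {P : ZMod 2 → Prop} : (∀ i, P i) ↔ P 0 ∧ P 1 :=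
  Fin.forall_fin_two

theorem X1_mul_X1 : X1 * X1 = 1 := by
  ext i j; revert i j; simp +decide [forall_zmod_two, X1, mul_apply]

theorem Z1_mul_Z1 : Z1 * Z1 = 1 := by
  ext i j; revert i j; simp +decide [forall_zmod_two, Z1, mul_apply]

theorem Z1_mul_X1 : Z1 * X1 = -(X1 * Z1) := by
  ext i j; revert i j; simp +decide [forall_zmod_two, X1, Z1, mul_apply]

theorem isSelfAdjoint_X1 : IsSelfAdjoint X1 := by
  ext i j; revert i j; simp +decide [forall_zmod_two, X1]

theorem isSelfAdjoint_Z1 : IsSelfAdjoint Z1 := by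
  ext i j; revert i j; simp +decide [forall_zmod_two, Z1]

noncomputable def pauli (p : ZMod 2 × ZMod 2) : Matrix (ZMod 2) (ZMod 2) ℂ :=
  X1 ^ p.1.val * Z1 ^ p.2.val

def pauliSign (q p : ZMod 2 × ZMod 2) : ℤ :=
  (-1) ^ (p.2.val * q.1.val + p.1.val * q.2.val)

theorem conjTranspose_pauli_mul_pauli_mul_pauli (q p : ZMod 2 × ZMod 2) :
    (pauli q)ᴴ * pauli p * pauli q = pauliSign q p • pauli p :=
  star_mul_mul_mul_eq_neg_one_pow_zsmul isSelfAdjoint_X1 isSelfAdjoint_Z1 X1_mul_X1 Z1_mul_Z1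
    Z1_mul_X1 _ _ _ _

theorem sum_pauliSign_mul_pauliSign (p p' : ZMod 2 × ZMod 2) :
    ∑ q, pauliSign q p * pauliSign q p' = if p = p' then 4 else 0 := by
  revert p p'; decide

theorem conjTranspose_pauli_mul_mul_pauli_of_eq_sum {α : ZMod 2 × ZMod 2 → ℂ}
    {A : Matrix (ZMod 2) (ZMod 2) ℂ} (hA : A = ∑ p, α p • pauli p) (q : ZMod 2 × ZMod 2) :
    (pauli q)ᴴ * A * pauli q = ∑ p, ((pauliSign q p : ℂ) * α p) • pauli p := by
  simp only [hA, Finset.mul_sum, Finset.sum_mul, mul_smul_comm, smul_mul_assoc,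
    conjTranspose_pauli_mul_pauli_mul_pauli, mul_smul, Int.cast_smul_eq_zsmul, smul_comm (α _)]

/-- the Pauli twirl. For `A = ∑ α_{a,b} X^a Z^b`, conjugating the
attack `ρ ↦ A ρ A†` by a uniformly random Pauli converts it into the classical
mixture of Pauli attacks `∑ |α_{a,b}|² X^a Z^b ρ (X^a Z^b)†`. -/
theorem stmt_11 (α : ZMod 2 × ZMod 2 → ℂ) (A : Matrix (ZMod 2) (ZMod 2) ℂ)
    (hA : A = ∑ p : ZMod 2 × ZMod 2, α p • (X1 ^ p.1.val * Z1 ^ p.2.val))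
    (ρ : Matrix (ZMod 2) (ZMod 2) ℂ) :
    (1 / 4 : ℂ) •
        ∑ q : ZMod 2 × ZMod 2,
          (X1 ^ q.1.val * Z1 ^ q.2.val)ᴴ * A * (X1 ^ q.1.val * Z1 ^ q.2.val) * ρ *
            (X1 ^ q.1.val * Z1 ^ q.2.val)ᴴ * Aᴴ * (X1 ^ q.1.val * Z1 ^ q.2.val) =
      ∑ p : ZMod 2 × ZMod 2,
        (‖α p‖ ^ 2 : ℂ) •
          ((X1 ^ p.1.val * Z1 ^ p.2.val) * ρ * (X1 ^ p.1.val * Z1 ^ p.2.val)ᴴ) := by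
  change A = ∑ p, α p • pauli p at hA
  change (1 / 4 : ℂ) • ∑ q, (pauli q)ᴴ * A * pauli q * ρ * (pauli q)ᴴ * Aᴴ * pauli q =
    ∑ p, (‖α p‖ ^ 2 : ℂ) • (pauli p * ρ * (pauli p)ᴴ)
  have hterm : ∀ q, (pauli q)ᴴ * A * pauli q * ρ * (pauli q)ᴴ * Aᴴ * pauli q =
      (∑ p, ((pauliSign q p : ℂ) * α p) • pauli p) * ρ *
        star (∑ p, ((pauliSign q p : ℂ) * α p) • pauli p) := fun q => by
    simp only [← conjTranspose_pauli_mul_mul_pauli_of_eq_sum hA, star_eq_conjTranspose,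
      conjTranspose_mul, conjTranspose_conjTranspose, mul_assoc]
  have horth : ∀ p p', ∑ q, (pauliSign q p : ℂ) * star (pauliSign q p' : ℂ) =
      if p = p' then 4 else 0 := fun p p' => by
    simp only [star_intCast]
    exact_mod_cast sum_pauliSign_mul_pauliSign p p'
  rw [Finset.sum_congr rfl fun q _ => hterm q, sum_mul_mul_star_eq_of_orthogonal _ _ horth,
    smul_smul]
  norm_num [Complex.star_def, Complex.mul_conj', star_eq_conjTranspose]
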